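/- arXiv:1409.4266 — 6 statements merged into one kernel-verified Lean document; each statement's English description precedes it below -/
import Mathlib

section
/- Let f : [0,∞) → ℝ be continuous with f(0) = 0 and set g = Ψf. Then for all real numbers 0 ≤ a < b, the following are equivalent: (i) g(a) = g(b) = 0 and g(t) > 0 for all t ∈ (a,b); (ii) f(a) = f(b) = min{f(t) : 0 ≤ t ≤ b} and f(t) > f(a) for all t ∈ (a,b). In other words, the excursion intervals of g above 0 are exactly the excursion intervals of f above its running minimum; in particular the multiset of excursion lengths of f above its running minimum coincides with the multiset of excursion lengths of g above 0. -/
/-!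
Write `m x` for the running minimum of `f` on `[0, x]`. If `g = f - m` is positive on `(a, b)`,
then `m` takes no new value inside `(a, b)`: a new minimum would be attained at some `s ∈ (a, b)`
with `f s = m s`, i.e. `g s = 0`. Hence `m = f a` on `(a, b)`, and there both conditions say
`f > f a`. Continuity of `f` at `b` gives `f a ≤ f b`; antitonicity of `m` gives `f b ≤ f a`.
-/

open Set

section RunningMinimum

variable {f : ℝ → ℝ} {c x y : ℝ}

theorem sInf_image_Icc_le (hf : ContinuousOn f (Icc c x)) (hy : y ∈ Icc c x) :
    sInf (f '' Icc c x) ≤ f y :=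
  csInf_le (isCompact_Icc.image_of_continuousOn hf).bddBelow (mem_image_of_mem f hy)

theorem exists_eq_sInf_image_Icc (hf : ContinuousOn f (Icc c x)) (hcx : c ≤ x) :
    ∃ s ∈ Icc c x, f s = sInf (f '' Icc c x) :=
  (isCompact_Icc.image_of_continuousOn hf).sInf_mem ((nonempty_Icc.2 hcx).image f)

theorem sInf_image_Icc_le_sInf_image_Icc (hf : ContinuousOn f (Icc c y)) (hcx : c ≤ x)
    (hxy : x ≤ y) : sInf (f '' Icc c y) ≤ sInf (f '' Icc c x) :=
  csInf_le_csInf (isCompact_Icc.image_of_continuousOn hf).bddBelow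
    ((nonempty_Icc.2 hcx).image f) (image_mono (Icc_subset_Icc le_rfl hxy))

theorem sInf_image_Icc_eq_of_lt_on_Ioo {a b : ℝ} (hf : ContinuousOn f (Icc c b)) (hca : c ≤ a)
    (ha : f a = sInf (f '' Icc c a)) (hlt : ∀ s ∈ Ioo a b, sInf (f '' Icc c s) < f s) :
    ∀ t ∈ Ioo a b, sInf (f '' Icc c t) = f a := by
  intro t ht
  have hft : ContinuousOn f (Icc c t) := hf.mono (Icc_subset_Icc le_rfl ht.2.le)
  refine le_antisymm (ha ▸ sInf_image_Icc_le_sInf_image_Icc hft hca ht.1.le) ?_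
  obtain ⟨s, hs, hfs⟩ := exists_eq_sInf_image_Icc hft (hca.trans ht.1.le)
  by_cases hsa : s ≤ a
  · exact ha ▸ hfs ▸ sInf_image_Icc_le (hf.mono (Icc_subset_Icc le_rfl (ht.1.trans ht.2).le))
      ⟨hs.1, hsa⟩
  · have hs' : s ∈ Ioo a b := ⟨not_le.1 hsa, hs.2.trans_lt ht.2⟩
    have hts := sInf_image_Icc_le_sInf_image_Icc hft hs.1 hs.2
    linarith [hlt s hs']

end RunningMinimum

theorem le_of_continuousWithinAt_Ioo {f : ℝ → ℝ} {a b c : ℝ} (hab : a < b)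
    (hf : ContinuousWithinAt f (Ioo a b) b) (h : ∀ t ∈ Ioo a b, c ≤ f t) : c ≤ f b :=
  ContinuousWithinAt.closure_le (by simp [closure_Ioo hab.ne, hab.le]) continuousWithinAt_const
    hf h

theorem stmt0_general (f : ℝ → ℝ) (hf : ContinuousOn f (Set.Ici 0))
    (g : ℝ → ℝ) (hg : ∀ x, 0 ≤ x → g x = f x - sInf (f '' Set.Icc 0 x))
    (a b : ℝ) (ha : 0 ≤ a) (hab : a < b) :
    (g a = 0 ∧ g b = 0 ∧ ∀ t ∈ Set.Ioo a b, 0 < g t) ↔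
    (f a = f b ∧ f a = sInf (f '' Set.Icc 0 b) ∧ ∀ t ∈ Set.Ioo a b, f a < f t) := by
  have hb : 0 ≤ b := ha.trans hab.le
  have hg' : ∀ t ∈ Ioo a b, g t = f t - sInf (f '' Icc 0 t) := fun t ht ↦ hg t (ha.trans ht.1.le)
  have hmin_ba := sInf_image_Icc_le_sInf_image_Icc (hf.mono Icc_subset_Ici_self) ha hab.le
  constructor
  · rintro ⟨hga, hgb, hpos⟩
    have hfa : f a = sInf (f '' Icc 0 a) := by linarith [hg a ha]
    have hfb : f b = sInf (f '' Icc 0 b) := by linarith [hg b hb]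
    have hmin_const := sInf_image_Icc_eq_of_lt_on_Ioo (hf.mono Icc_subset_Ici_self) ha hfa
      (fun s hs ↦ by linarith [hpos s hs, hg' s hs])
    have habove : ∀ t ∈ Ioo a b, f a < f t := fun t ht ↦ by
      linarith [hpos t ht, hg' t ht, hmin_const t ht]
    have hfab : f a = f b := le_antisymm
      (le_of_continuousWithinAt_Ioo hab ((hf b hb).mono fun t ht ↦ ha.trans ht.1.le)
        fun t ht ↦ (habove t ht).le)
      (by linarith)
    exact ⟨hfab, hfab ▸ hfb, habove⟩
  · rintro ⟨hfab, hfb, habove⟩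
    have hfa : sInf (f '' Icc 0 a) = f a :=
      le_antisymm (sInf_image_Icc_le (hf.mono Icc_subset_Ici_self) ⟨ha, le_rfl⟩) (by linarith)
    refine ⟨by rw [hg a ha, hfa, sub_self], by rw [hg b hb, ← hfb, hfab, sub_self], ?_⟩
    intro t ht
    have hmin_ta := sInf_image_Icc_le_sInf_image_Icc (hf.mono Icc_subset_Ici_self) ha ht.1.le
    linarith [hg' t ht, habove t ht]

/-- For a continuous `f : [0,∞) → ℝ` with `f 0 = 0` and `g = Ψ f`
(where `Ψ f x = f x − min {f y : 0 ≤ y ≤ x}`), for all `0 ≤ a < b`: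
`[a,b]` is an excursion interval of `g` above `0` iff it is an excursion interval
of `f` above its running minimum. -/
theorem stmt0 (f : ℝ → ℝ) (hf : ContinuousOn f (Set.Ici 0)) (hf0 : f 0 = 0)
    (g : ℝ → ℝ) (hg : ∀ x, 0 ≤ x → g x = f x - sInf (f '' Set.Icc 0 x))
    (a b : ℝ) (ha : 0 ≤ a) (hab : a < b) :
    (g a = 0 ∧ g b = 0 ∧ ∀ t ∈ Set.Ioo a b, 0 < g t) ↔
    (f a = f b ∧ f a = sInf (f '' Set.Icc 0 b) ∧ ∀ t ∈ Set.Ioo a b, f a < f t) :=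
  stmt0_general f hf g hg a b ha hab
end

section
/- For every t ∈ [0,1], every connected component of G_t is a Prim interval. Equivalently: for all indices 1 ≤ i ≤ k ≤ j ≤ n, if u_i and u_j lie in the same connected component of G_t, then u_k lies in that same connected component. -/
/-- A walk from inside a set to outside must cross the boundary. -/
lemma cross_cut {α : Type*} (V : SimpleGraph α) (S : Set α) {x y : α}
    (h : V.Reachable x y) (hx : x ∈ S) (hy : y ∉ S) :
    ∃ a b, V.Adj a b ∧ a ∈ S ∧ b ∉ S := by
  obtain ⟨p⟩ := h
  induction p with
  | nil => exact absurd hx hy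
  | @cons x z y hxz p ih =>
    by_cases hz : z ∈ S
    · exact ih hz hy
    · exact ⟨x, z, hxz, hx, hz⟩

/-- Let `G` be a connected graph on `[n]` with positive pairwise-distinct
edge weights, and let `u 0, u 1, …, u (n-1)` be its vertices in Prim order (starting
from vertex `1`, i.e. `u 0 = 0`): for each `1 ≤ i < n`, the vertex `u i` is the
endpoint outside `V_i = {u j : j < i}` of the minimal-weight edge leaving `V_i`.
For `t ∈ [0,1]`, let `Gt t` be the graph keeping the edges of weight at most `t`.
Then every connected component of `Gt t` is a Prim interval: if `i ≤ k ≤ j` and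
`u i`, `u j` are in the same component of `Gt t`, then so is `u k`. -/
theorem stmt1 (n : ℕ) (hn : 0 < n) (G : SimpleGraph (Fin n)) (hconn : G.Connected)
    (w : Sym2 (Fin n) → ℝ)
    (hpos : ∀ e ∈ G.edgeSet, 0 < w e)
    (hdist : ∀ e ∈ G.edgeSet, ∀ e' ∈ G.edgeSet, w e = w e' → e = e')
    (u : Fin n → Fin n) (hu : Function.Bijective u)
    (hu0 : u ⟨0, hn⟩ = ⟨0, hn⟩)
    (hprim : ∀ i : ℕ, 1 ≤ i → ∀ hi : i < n,
      ∃ j : Fin n, (j : ℕ) < i ∧ G.Adj (u j) (u ⟨i, hi⟩) ∧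
        ∀ a b : Fin n, G.Adj a b →
          (∃ k : Fin n, (k : ℕ) < i ∧ u k = a) →
          (¬ ∃ k : Fin n, (k : ℕ) < i ∧ u k = b) →
          w s(u j, u ⟨i, hi⟩) ≤ w s(a, b))
    (Gt : ℝ → SimpleGraph (Fin n))
    (hGt : ∀ (t : ℝ) (a b : Fin n), (Gt t).Adj a b ↔ G.Adj a b ∧ w s(a, b) ≤ t) :
    ∀ t ∈ Set.Icc (0 : ℝ) 1, ∀ i k j : Fin n, i ≤ k → k ≤ j →
      (Gt t).Reachable (u i) (u j) → (Gt t).Reachable (u i) (u k) := by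
  intro t ht
  suffices H : ∀ m : ℕ, ∀ i k j : Fin n, (k : ℕ) = m → i ≤ k → k ≤ j →
      (Gt t).Reachable (u i) (u j) → (Gt t).Reachable (u i) (u k) by
    intro i k j hik hkj h
    exact H k i k j rfl hik hkj h
  intro m
  induction m using Nat.strong_induction_on with
  | _ m IH =>
    intro i k j hkm hik hkj hreach
    rcases eq_or_lt_of_le hik with heq | hlt
    · rw [← heq]
    · -- i < k
      have hk1 : 1 ≤ (k : ℕ) := by
        have : (i : ℕ) < (k : ℕ) := hlt
        omega
      obtain ⟨j', hj'lt, hadj, hmin⟩ := hprim k hk1 k.isLt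
      have hkk : (⟨(k : ℕ), k.isLt⟩ : Fin n) = k := rfl
      rw [hkk] at hadj hmin
      -- the component of u i crosses the cut V_k
      have hxS : u i ∈ {v | ∃ l : Fin n, (l : ℕ) < (k : ℕ) ∧ u l = v} := ⟨i, hlt, rfl⟩
      have hyS : u j ∉ {v | ∃ l : Fin n, (l : ℕ) < (k : ℕ) ∧ u l = v} := by
        rintro ⟨l, hl, hlu⟩
        have : l = j := hu.injective hlu
        subst this
        have : (k : ℕ) ≤ (l : ℕ) := hkj
        omega
      obtain ⟨a, b, hab, haS, hbS⟩ := cross_cut (Gt t) _ hreach hxS hyS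
      have habG := (hGt t a b).mp hab
      have hwle : w s(u j', u k) ≤ w s(a, b) := hmin a b habG.1 haS hbS
      have hedge : (Gt t).Adj (u j') (u k) :=
        (hGt t (u j') (u k)).mpr ⟨hadj, le_trans hwle habG.2⟩
      rcases le_or_gt i j' with h1 | h2
      · -- i ≤ j' < k : by IH at j', u i ~ u j', then edge to u k
        have hr := IH (j' : ℕ) (by omega) i j' j rfl h1
          (le_trans (le_of_lt (show j' < k from hj'lt)) hkj) hreach
        exact hr.trans hedge.reachable
      · -- j' < i : by IH at i applied to (j', i, k), u j' ~ u i
        have hr : (Gt t).Reachable (u j') (u k) := hedge.reachable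
        have hi2 := IH (i : ℕ) (by omega) j' i k rfl (le_of_lt h2) (le_of_lt hlt) hr
        exact hi2.symm.trans hr
end

section
/- The number of indices k ∈ {1, …, n} with Z(k) = 0 equals the number of connected components of g. Moreover, if 0 = k_0 < k_1 < ⋯ < k_m = n is the increasing enumeration of {0} ∪ {k ∈ {1,…,n} : Z(k) = 0}, then for each 1 ≤ j ≤ m the set {v_{k_{j−1}+1}, …, v_{k_j}} is exactly the vertex set of a connected component of g, and every connected component of g arises in this way; thus the sizes of the connected components, listed in exploration order, are the gaps k_j − k_{j−1} between successive zeros of Z. -/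
/-- Let `g` be a graph on `[n]`, `<` a linear order on `[n]` (encoded by an
injective rank function `ρ`), and `v 0, …, v (n-1)` the exploration of `g`: `v 0` is the
smallest vertex, and at each step the next vertex is the smallest element of the
neighbourhood `Ngh k` of the set `S k` of already visited vertices if nonempty, else the
smallest unvisited vertex. With `Z k = #(Ngh k)` (so `Z 0 = 0`):
(1) the number of `k ∈ {1,…,n}` with `Z k = 0` equals the number of connected components
of `g`; (2) between two consecutive zeros `k < k'` of `Z`, the visited vertices
`{v j : k ≤ j < k'}` form exactly a connected component of `g`; and (3) every connected
component of `g` arises this way. -/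
theorem stmt2 (n : ℕ) (hn : 0 < n) (g : SimpleGraph (Fin n))
    (ρ : Fin n → ℕ) (hρ : Function.Injective ρ)
    (v : Fin n → Fin n)
    (S : ℕ → Set (Fin n))
    (hS : ∀ k : ℕ, S k = {x | ∃ j : Fin n, (j : ℕ) < k ∧ v j = x})
    (Ngh : ℕ → Set (Fin n))
    (hNgh : ∀ k : ℕ, Ngh k = {x | x ∉ S k ∧ ∃ y ∈ S k, g.Adj x y})
    (Z : ℕ → ℕ) (hZ : ∀ k, Z k = (Ngh k).ncard)
    (hv0 : ∀ x : Fin n, ρ (v ⟨0, hn⟩) ≤ ρ x)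
    (hstep : ∀ k : ℕ, 1 ≤ k → ∀ hk : k < n,
      ((Ngh k).Nonempty →
        v ⟨k, hk⟩ ∈ Ngh k ∧ ∀ x ∈ Ngh k, ρ (v ⟨k, hk⟩) ≤ ρ x) ∧
      (Ngh k = ∅ →
        v ⟨k, hk⟩ ∉ S k ∧ ∀ x : Fin n, x ∉ S k → ρ (v ⟨k, hk⟩) ≤ ρ x)) :
    ({k : ℕ | 1 ≤ k ∧ k ≤ n ∧ Z k = 0}).ncard = Nat.card g.ConnectedComponent ∧
    (∀ k k' : ℕ, k < k' → k' ≤ n → Z k = 0 → Z k' = 0 →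
      (∀ l : ℕ, k < l → l < k' → Z l ≠ 0) → ∀ hk : k < n,
        {x | ∃ j : ℕ, ∃ hj : j < n, k ≤ j ∧ j < k' ∧ v ⟨j, hj⟩ = x}
          = {x | g.Reachable x (v ⟨k, hk⟩)}) ∧
    (∀ x : Fin n, ∃ k k' : ℕ, k < k' ∧ k' ≤ n ∧ Z k = 0 ∧ Z k' = 0 ∧
      (∀ l : ℕ, k < l → l < k' → Z l ≠ 0) ∧
      {y | g.Reachable y x}
        = {y | ∃ j : ℕ, ∃ hj : j < n, k ≤ j ∧ j < k' ∧ v ⟨j, hj⟩ = y}) := by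
  classical
  have hS0 : S 0 = ∅ := by rw [hS]; ext x; simp
  have hmem : ∀ (j k : ℕ) (hj : j < n), j < k → v ⟨j, hj⟩ ∈ S k := by
    intro j k hj hjk; rw [hS]; exact ⟨⟨j, hj⟩, hjk, rfl⟩
  have hvS : ∀ (k : ℕ) (hk : k < n), v ⟨k, hk⟩ ∉ S k := by
    intro k hk
    rcases Nat.eq_zero_or_pos k with rfl | hk1
    · rw [hS0]; exact Set.notMem_empty _
    · by_cases hne : (Ngh k).Nonempty
      · have h := ((hstep k hk1 hk).1 hne).1
        rw [hNgh] at h; exact h.1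
      · have he : Ngh k = ∅ := Set.not_nonempty_iff_eq_empty.mp hne
        exact ((hstep k hk1 hk).2 he).1
  have hinj : ∀ (a b : ℕ) (ha : a < n) (hb : b < n), v ⟨a, ha⟩ = v ⟨b, hb⟩ → a = b := by
    intro a b ha hb hab
    by_contra hne
    rcases Nat.lt_or_ge a b with h | h
    · apply hvS b hb
      rw [← hab]; exact hmem a b ha h
    · have h' : b < a := lt_of_le_of_ne h (Ne.symm hne)
      apply hvS a ha
      rw [hab]; exact hmem b a hb h'
  have hvinj : Function.Injective v := by
    intro a b hab
    exact Fin.ext (hinj a.1 b.1 a.2 b.2 (by simpa [Fin.eta] using hab))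
  have hvsurj : Function.Surjective v := Finite.surjective_of_injective hvinj
  have hSn : ∀ x : Fin n, x ∈ S n := by
    intro x; obtain ⟨j, rfl⟩ := hvsurj x
    rw [hS]; exact ⟨j, j.2, rfl⟩
  have hZeq : ∀ k, Z k = 0 ↔ Ngh k = ∅ := by
    intro k; rw [hZ]; exact Set.ncard_eq_zero (Set.toFinite _)
  have hZzero : Z 0 = 0 := by
    rw [hZeq, hNgh, hS0]; ext x; simp
  have hZn : Z n = 0 := by
    rw [hZeq, hNgh]; ext x; simp [hSn x]
  have hclosed : ∀ k, Z k = 0 → ∀ x y, g.Adj x y → y ∈ S k → x ∈ S k := by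
    intro k hk x y hadj hy
    by_contra hx
    have hmemN : x ∈ Ngh k := by rw [hNgh]; exact ⟨hx, y, hy, hadj⟩
    rw [(hZeq k).mp hk] at hmemN; exact hmemN
  have hwalk : ∀ k, Z k = 0 → ∀ x y : Fin n, g.Walk x y → y ∈ S k → x ∈ S k := by
    intro k hk x y w
    induction w with
    | nil => exact id
    | cons h p ih => intro hy; exact hclosed k hk _ _ h (ih hy)
  have hSsub : ∀ k k' : ℕ, k ≤ k' → S k ⊆ S k' := by
    intro k k' hkk x hx; rw [hS] at hx ⊢
    obtain ⟨j, hj, rfl⟩ := hx; exact ⟨j, lt_of_lt_of_le hj hkk, rfl⟩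
  have hreachblk : ∀ k (hk : k < n) k', Z k = 0 → (∀ l, k < l → l < k' → Z l ≠ 0) →
      ∀ j (hj : j < n), k ≤ j → j < k' → g.Reachable (v ⟨j, hj⟩) (v ⟨k, hk⟩) := by
    intro k hk k' hZk hgap j
    induction j using Nat.strong_induction_on with
    | _ j ih =>
      intro hj hkj hjk'
      rcases eq_or_lt_of_le hkj with rfl | hlt
      · exact SimpleGraph.Reachable.refl _
      · have hj1 : 1 ≤ j := Nat.lt_of_le_of_lt (Nat.zero_le k) hlt
        have hZj : Z j ≠ 0 := hgap j hlt hjk'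
        have hne : (Ngh j).Nonempty := by
          rw [Set.nonempty_iff_ne_empty]
          intro he; exact hZj ((hZeq j).mpr he)
        have hmemN := ((hstep j hj1 hj).1 hne).1
        rw [hNgh] at hmemN
        obtain ⟨hns, y, hyS, hadj⟩ := hmemN
        rw [hS] at hyS
        obtain ⟨i, hij, rfl⟩ := hyS
        rcases Nat.lt_or_ge i.1 k with hik | hik
        · exfalso
          have hySk : v i ∈ S k := by rw [hS]; exact ⟨i, hik, rfl⟩
          have hin : v ⟨j, hj⟩ ∈ S k := hclosed k hZk _ _ hadj hySk
          exact hns (hSsub k j (le_of_lt hlt) hin)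
        · have hr := ih i.1 hij i.2 hik (lt_trans hij hjk')
          exact hadj.reachable.trans (by simpa [Fin.eta] using hr)
  have hblock : ∀ k k' : ℕ, k < k' → k' ≤ n → Z k = 0 → Z k' = 0 →
      (∀ l : ℕ, k < l → l < k' → Z l ≠ 0) → ∀ hk : k < n,
      {x | ∃ j : ℕ, ∃ hj : j < n, k ≤ j ∧ j < k' ∧ v ⟨j, hj⟩ = x}
        = {x | g.Reachable x (v ⟨k, hk⟩)} := by
    intro k k' hkk' hk'n hZk hZk' hgap hk
    ext x
    simp only [Set.mem_setOf_eq]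
    constructor
    · rintro ⟨j, hj, hkj, hjk', rfl⟩
      exact hreachblk k hk k' hZk hgap j hj hkj hjk'
    · intro hx
      have hx' := hx.symm
      have hvkS : v ⟨k, hk⟩ ∈ S k' := hmem k k' hk hkk'
      obtain ⟨w⟩ := hx
      have hxS : x ∈ S k' := hwalk k' hZk' x _ w hvkS
      rw [hS] at hxS
      obtain ⟨i, hik', rfl⟩ := hxS
      have hki : k ≤ i.1 := by
        by_contra hik
        push_neg at hik
        have hiSk : v i ∈ S k := by rw [hS]; exact ⟨i, hik, rfl⟩
        have hvk : v ⟨k, hk⟩ ∈ S k := by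
          obtain ⟨w2⟩ := hx'
          exact hwalk k hZk _ _ w2 hiSk
        exact hvS k hk hvk
      exact ⟨i.1, i.2, hki, hik', by simp [Fin.eta]⟩
  have hprevzero : ∀ m, Z (Nat.findGreatest (fun l => Z l = 0) m) = 0 :=
    fun m => Nat.findGreatest_spec (P := fun l => Z l = 0) (Nat.zero_le m) hZzero
  have hprevle : ∀ m, Nat.findGreatest (fun l => Z l = 0) m ≤ m :=
    fun m => Nat.findGreatest_le m
  have hprevgap : ∀ k' : ℕ, ∀ l, Nat.findGreatest (fun l => Z l = 0) (k' - 1) < l → l < k' →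
      Z l ≠ 0 := by
    intro k' l h1 h2
    exact Nat.findGreatest_is_greatest (P := fun l => Z l = 0) h1 (Nat.le_sub_one_of_lt h2)
  have main : ∀ x : Fin n, ∃ k' : ℕ,
      (1 ≤ k' ∧ k' ≤ n ∧ Z k' = 0) ∧
      Nat.findGreatest (fun l => Z l = 0) (k' - 1) < k' ∧
      ∀ hk : Nat.findGreatest (fun l => Z l = 0) (k' - 1) < n,
        g.Reachable x (v ⟨Nat.findGreatest (fun l => Z l = 0) (k' - 1), hk⟩) := by
    intro x
    obtain ⟨j, rfl⟩ := hvsurj x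
    have hjn : (j : ℕ) < n := j.2
    have hex : ∃ l, (j : ℕ) < l ∧ Z l = 0 := ⟨n, hjn, hZn⟩
    refine ⟨Nat.find hex, ?_⟩
    have hk'spec := Nat.find_spec hex
    have hjk' : (j : ℕ) < Nat.find hex := hk'spec.1
    have hZk' : Z (Nat.find hex) = 0 := hk'spec.2
    have hk'n : Nat.find hex ≤ n := Nat.find_le ⟨hjn, hZn⟩
    have h1k' : 1 ≤ Nat.find hex := by omega
    have hkle : Nat.findGreatest (fun l => Z l = 0) (Nat.find hex - 1) ≤ Nat.find hex - 1 :=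
      hprevle _
    have hkk' : Nat.findGreatest (fun l => Z l = 0) (Nat.find hex - 1) < Nat.find hex := by
      omega
    have hkj : Nat.findGreatest (fun l => Z l = 0) (Nat.find hex - 1) ≤ (j : ℕ) := by
      by_contra h
      push_neg at h
      exact Nat.find_min hex hkk' ⟨h, hprevzero _⟩
    refine ⟨⟨h1k', hk'n, hZk'⟩, hkk', fun hk => ?_⟩
    have hr := hreachblk _ hk (Nat.find hex) (hprevzero _) (hprevgap _) j.1 j.2 hkj hjk'
    simpa [Fin.eta] using hr
  refine ⟨?_, hblock, ?_⟩
  · rw [← Nat.card_coe_set_eq]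
    have hlt : ∀ p : {k : ℕ | 1 ≤ k ∧ k ≤ n ∧ Z k = 0},
        Nat.findGreatest (fun l => Z l = 0) (p.1 - 1) < n := by
      rintro ⟨k', hk'⟩
      obtain ⟨h1, h2, h3⟩ := hk'
      have := hprevle (k' - 1)
      simp only []
      omega
    apply Nat.card_eq_of_bijective
      (fun p => g.connectedComponentMk (v ⟨Nat.findGreatest (fun l => Z l = 0) (p.1 - 1), hlt p⟩))
    constructor
    · have key : ∀ p q : {k : ℕ | 1 ≤ k ∧ k ≤ n ∧ Z k = 0}, p.1 < q.1 →
          g.connectedComponentMk (v ⟨Nat.findGreatest (fun l => Z l = 0) (p.1 - 1), hlt p⟩) ≠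
          g.connectedComponentMk (v ⟨Nat.findGreatest (fun l => Z l = 0) (q.1 - 1), hlt q⟩) := by
        intro p q hpq hfeq
        obtain ⟨h1p, h2p, h3p⟩ := p.2
        obtain ⟨h1q, h2q, h3q⟩ := q.2
        have hreach := (SimpleGraph.ConnectedComponent.exact hfeq).symm
        have hkp1 : Nat.findGreatest (fun l => Z l = 0) (p.1 - 1) ≤ p.1 - 1 := hprevle _
        have hkk'p : Nat.findGreatest (fun l => Z l = 0) (p.1 - 1) < p.1 := by omega
        have hbp := hblock _ p.1 hkk'p h2p (hprevzero _) h3p (hprevgap _) (hlt p)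
        have hmemb : v ⟨Nat.findGreatest (fun l => Z l = 0) (q.1 - 1), hlt q⟩ ∈
            {x | ∃ j : ℕ, ∃ hj : j < n, Nat.findGreatest (fun l => Z l = 0) (p.1 - 1) ≤ j ∧
              j < p.1 ∧ v ⟨j, hj⟩ = x} := by
          rw [hbp]; exact hreach
        obtain ⟨j, hj, hkpj, hjp, hje⟩ := hmemb
        have hjeq := hinj j _ hj (hlt q) hje
        have hkq : p.1 ≤ Nat.findGreatest (fun l => Z l = 0) (q.1 - 1) :=
          Nat.le_findGreatest (Nat.le_sub_one_of_lt hpq) h3p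
        omega
      intro p q hpq
      rcases lt_trichotomy p.1 q.1 with h | h | h
      · exact absurd hpq (key p q h)
      · exact Subtype.ext h
      · exact absurd hpq.symm (key q p h)
    · intro C
      induction C using SimpleGraph.ConnectedComponent.ind with
      | _ x =>
        obtain ⟨k', ⟨h1, h2, h3⟩, hkk', hreach⟩ := main x
        refine ⟨⟨k', h1, h2, h3⟩, ?_⟩
        exact (SimpleGraph.ConnectedComponent.sound (hreach (hlt ⟨k', h1, h2, h3⟩))).symm
  · intro x
    obtain ⟨k', ⟨h1, h2, h3⟩, hkk', hreach⟩ := main x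
    have hk : Nat.findGreatest (fun l => Z l = 0) (k' - 1) < n := lt_of_lt_of_le hkk' h2
    refine ⟨Nat.findGreatest (fun l => Z l = 0) (k' - 1), k', hkk', h2, hprevzero _, h3,
      hprevgap _, ?_⟩
    rw [hblock _ k' hkk' h2 (hprevzero _) h3 (hprevgap _) hk]
    ext y
    simp only [Set.mem_setOf_eq]
    exact ⟨fun h => h.trans (hreach hk), fun h => h.trans (hreach hk).symm⟩
end

section
/- For every t ∈ [0,1], the exploration of the graph G_t performed with the Prim order of (G, w) visits the vertices exactly in Prim order: if v_1, …, v_n is the exploration of g = G_t defined with the linear order u_1 < u_2 < ⋯ < u_n, then v_k = u_k for every 1 ≤ k ≤ n. Consequently, for every t ∈ [0,1] the sizes of the connected components of G_t, listed in Prim order, are the gaps between successive zeros of the map k ↦ #Neigh_{G_t}({u_1, …, u_k}). -/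
/-- Same Prim setting as Statement 1, with `ρ` the Prim rank function
(`ρ (u j) = j`). Fix `t ∈ [0,1]` and let `Gt` be the graph keeping the edges of `G` of
weight at most `t`. If `v 0, …, v (n-1)` is the exploration of `Gt` performed with the
linear order given by Prim ranks, then `v k = u k` for every `k`. Consequently, between
two consecutive zeros `k < k'` of `Z k = #Neigh_{Gt}({u 0, …, u (k-1)})`, the vertices
`{u j : k ≤ j < k'}` form exactly a connected component of `Gt`, so the sizes of the
components of `Gt`, listed in Prim order, are the gaps between successive zeros of `Z`. -/
theorem stmt4 (n : ℕ) (hn : 0 < n) (G : SimpleGraph (Fin n)) (hconn : G.Connected)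
    (w : Sym2 (Fin n) → ℝ)
    (hpos : ∀ e ∈ G.edgeSet, 0 < w e)
    (hdist : ∀ e ∈ G.edgeSet, ∀ e' ∈ G.edgeSet, w e = w e' → e = e')
    (u : Fin n → Fin n) (hu : Function.Bijective u)
    (hu0 : u ⟨0, hn⟩ = ⟨0, hn⟩)
    (hprim : ∀ i : ℕ, 1 ≤ i → ∀ hi : i < n,
      ∃ j : Fin n, (j : ℕ) < i ∧ G.Adj (u j) (u ⟨i, hi⟩) ∧
        ∀ a b : Fin n, G.Adj a b →
          (∃ k : Fin n, (k : ℕ) < i ∧ u k = a) →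
          (¬ ∃ k : Fin n, (k : ℕ) < i ∧ u k = b) →
          w s(u j, u ⟨i, hi⟩) ≤ w s(a, b))
    (ρ : Fin n → Fin n) (hρ : ∀ j : Fin n, ρ (u j) = j)
    (t : ℝ) (ht : t ∈ Set.Icc (0 : ℝ) 1)
    (Gt : SimpleGraph (Fin n))
    (hGt : ∀ a b : Fin n, Gt.Adj a b ↔ G.Adj a b ∧ w s(a, b) ≤ t)
    (v : Fin n → Fin n)
    (S : ℕ → Set (Fin n))
    (hS : ∀ k : ℕ, S k = {x | ∃ j : Fin n, (j : ℕ) < k ∧ v j = x})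
    (Ngh : ℕ → Set (Fin n))
    (hNgh : ∀ k : ℕ, Ngh k = {x | x ∉ S k ∧ ∃ y ∈ S k, Gt.Adj x y})
    (hv0 : ∀ x : Fin n, ρ (v ⟨0, hn⟩) ≤ ρ x)
    (hstep : ∀ k : ℕ, 1 ≤ k → ∀ hk : k < n,
      ((Ngh k).Nonempty →
        v ⟨k, hk⟩ ∈ Ngh k ∧ ∀ x ∈ Ngh k, ρ (v ⟨k, hk⟩) ≤ ρ x) ∧
      (Ngh k = ∅ →
        v ⟨k, hk⟩ ∉ S k ∧ ∀ x : Fin n, x ∉ S k → ρ (v ⟨k, hk⟩) ≤ ρ x))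
    (Z : ℕ → ℕ)
    (hZ : ∀ k : ℕ, Z k =
      ({x | x ∉ {y | ∃ j : Fin n, (j : ℕ) < k ∧ u j = y} ∧
        ∃ y, (∃ j : Fin n, (j : ℕ) < k ∧ u j = y) ∧ Gt.Adj x y}).ncard) :
    (∀ k : Fin n, v k = u k) ∧
    (∀ k k' : ℕ, k < k' → k' ≤ n → Z k = 0 → Z k' = 0 →
      (∀ l : ℕ, k < l → l < k' → Z l ≠ 0) → ∀ hk : k < n,
        {x | ∃ j : ℕ, ∃ hj : j < n, k ≤ j ∧ j < k' ∧ u ⟨j, hj⟩ = x}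
          = {x | Gt.Reachable x (u ⟨k, hk⟩)}) := by
  -- basic facts about u and ρ
  have hu_inj : Function.Injective u := hu.1
  have hux : ∀ x, u (ρ x) = x := by
    intro x
    obtain ⟨a, rfl⟩ := hu.2 x
    rw [hρ]
  have hρ_inj : Function.Injective ρ := by
    intro x y h
    have h2 := congrArg u h
    rwa [hux, hux] at h2
  -- Part 1 : v = u
  have hveq : ∀ m : ℕ, ∀ hm : m < n, v ⟨m, hm⟩ = u ⟨m, hm⟩ := by
    intro m
    induction m using Nat.strong_induction_on with
    | _ m IH =>
      intro hm
      rcases Nat.eq_zero_or_pos m with h0 | h1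
      · subst h0
        have h := hv0 (u ⟨0, hm⟩)
        rw [hρ] at h
        have heq : ρ (v ⟨0, hm⟩) = (⟨0, hm⟩ : Fin n) :=
          le_antisymm h (Fin.mk_le_of_le_val (Nat.zero_le _))
        apply hρ_inj
        rw [heq, hρ]
      · -- characterize S m
        have hSm : ∀ x, x ∈ S m ↔ (ρ x : ℕ) < m := by
          intro x
          rw [hS]
          constructor
          · rintro ⟨j, hj, rfl⟩
            have hvj : v j = u j := by
              have h2 := IH j.val hj j.isLt
              simpa using h2
            rw [hvj, hρ]
            exact hj
          · intro h
            refine ⟨ρ x, h, ?_⟩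
            have h2 := IH (ρ x).val h (ρ x).isLt
            simpa [hux] using h2
        have humem : u ⟨m, hm⟩ ∉ S m := by
          rw [hSm, hρ]
          exact lt_irrefl m
        have key : ρ (v ⟨m, hm⟩) ≤ ρ (u ⟨m, hm⟩) ∧ v ⟨m, hm⟩ ∉ S m := by
          rcases (Ngh m).eq_empty_or_nonempty with hemp | hne
          · obtain ⟨hvS, hmin2⟩ := (hstep m h1 hm).2 hemp
            exact ⟨hmin2 _ humem, hvS⟩
          · -- show u ⟨m,hm⟩ ∈ Ngh m
            obtain ⟨x, hx⟩ := hne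
            rw [hNgh] at hx
            obtain ⟨hxS, y, hyS, hxy⟩ := hx
            have hym : (ρ y : ℕ) < m := (hSm y).mp hyS
            obtain ⟨hGxy, hwxy⟩ := (hGt x y).mp hxy
            obtain ⟨j, hjm, hadj, hmin⟩ := hprim m h1 hm
            have hnotx : ¬ ∃ kk : Fin n, (kk : ℕ) < m ∧ u kk = x := by
              rintro ⟨kk, hkk, rfl⟩
              exact hxS ((hSm _).mpr (by rw [hρ]; exact hkk))
            have hwle : w s(u j, u ⟨m, hm⟩) ≤ w s(y, x) :=
              hmin y x hGxy.symm ⟨ρ y, hym, hux y⟩ hnotx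
            have hws : w s(y, x) = w s(x, y) := by rw [Sym2.eq_swap]
            have hGtm : Gt.Adj (u ⟨m, hm⟩) (u j) := by
              rw [hGt]
              refine ⟨hadj.symm, ?_⟩
              rw [Sym2.eq_swap]
              calc w s(u j, u ⟨m, hm⟩) ≤ w s(y, x) := hwle
                _ = w s(x, y) := hws
                _ ≤ t := hwxy
            have huNgh : u ⟨m, hm⟩ ∈ Ngh m := by
              rw [hNgh]
              exact ⟨humem, u j, (hSm _).mpr (by rw [hρ]; exact hjm), hGtm⟩
            obtain ⟨hvN, hmin2⟩ := (hstep m h1 hm).1 ⟨_, huNgh⟩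
            have hvnS : v ⟨m, hm⟩ ∉ S m := by
              rw [hNgh] at hvN
              exact hvN.1
            exact ⟨hmin2 _ huNgh, hvnS⟩
        obtain ⟨hle, hnS⟩ := key
        rw [hρ] at hle
        have hge : m ≤ (ρ (v ⟨m, hm⟩) : ℕ) := by
          by_contra hc
          push_neg at hc
          exact hnS ((hSm _).mpr hc)
        have : ρ (v ⟨m, hm⟩) = (⟨m, hm⟩ : Fin n) := by
          apply Fin.ext
          have h3 : (ρ (v ⟨m, hm⟩) : ℕ) ≤ m := hle
          show (ρ (v ⟨m, hm⟩) : ℕ) = m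
          omega
        apply hρ_inj
        rw [this, hρ]
  refine ⟨fun k => by simpa using hveq k.val k.isLt, ?_⟩
  -- Part 2
  intro k k' hkk' hk'n hZk hZk' hmid hk
  set U : ℕ → Set (Fin n) := fun l => {x : Fin n | ∃ j : Fin n, (j : ℕ) < l ∧ u j = x} with hU
  have hZzero : ∀ l : ℕ, Z l = 0 → ∀ x y : Fin n, x ∉ U l → y ∈ U l → ¬ Gt.Adj x y := by
    intro l hl x y hx hy hadj
    rw [hZ] at hl
    have hemp := (Set.ncard_eq_zero (Set.toFinite _)).mp hl
    rw [Set.eq_empty_iff_forall_notMem] at hemp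
    exact hemp x ⟨hx, y, hy, hadj⟩
  have hZne : ∀ l : ℕ, ∀ hl : l < n, 1 ≤ l → Z l ≠ 0 →
      ∃ j : Fin n, (j : ℕ) < l ∧ Gt.Adj (u j) (u ⟨l, hl⟩) := by
    intro l hl h1 hZl
    rw [hZ] at hZl
    obtain ⟨x, hx⟩ := Set.nonempty_of_ncard_ne_zero hZl
    obtain ⟨hxU, y, hyU, hadj⟩ := hx
    obtain ⟨hGxy, hwxy⟩ := (hGt x y).mp hadj
    obtain ⟨j, hjl, hadjp, hmin⟩ := hprim l h1 hl
    have hwle : w s(u j, u ⟨l, hl⟩) ≤ w s(y, x) := hmin y x hGxy.symm hyU hxU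
    refine ⟨j, hjl, ?_⟩
    rw [hGt]
    refine ⟨hadjp, ?_⟩
    calc w s(u j, u ⟨l, hl⟩) ≤ w s(y, x) := hwle
      _ = w s(x, y) := by rw [Sym2.eq_swap]
      _ ≤ t := hwxy
  have hnotUk : ∀ (j : ℕ) (hj : j < n), k ≤ j → u ⟨j, hj⟩ ∉ U k := by
    rintro j hj hkj ⟨jj, hjjk, heq⟩
    have : jj = ⟨j, hj⟩ := hu_inj heq
    rw [this] at hjjk
    simp at hjjk
    omega
  -- forward direction: every u j (k ≤ j < k') is reachable from u k
  have reach : ∀ j : ℕ, ∀ hj : j < n, k ≤ j → j < k' → Gt.Reachable (u ⟨j, hj⟩) (u ⟨k, hk⟩) := by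
    intro j
    induction j using Nat.strong_induction_on with
    | _ j IH =>
      intro hj hkj hjk'
      rcases eq_or_lt_of_le hkj with heq | hlt
      · subst heq
        rfl
      · have hZl : Z j ≠ 0 := hmid j hlt hjk'
        obtain ⟨j0, hj0, hadj⟩ := hZne j hj (by omega) hZl
        have hj0k : k ≤ (j0 : ℕ) := by
          by_contra hc
          push_neg at hc
          exact hZzero k hZk (u ⟨j, hj⟩) (u j0)
            (hnotUk j hj hkj) ⟨j0, hc, rfl⟩ hadj.symm
        have hr0 : Gt.Reachable (u j0) (u ⟨k, hk⟩) := by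
          have h2 := IH j0.val hj0 j0.isLt hj0k (lt_trans hj0 hjk')
          simpa using h2
        exact (hadj.reachable.symm).trans hr0
  -- the interval is closed under Gt-edges
  have closed : ∀ a b : Fin n, Gt.Reachable a b →
      (∃ j : Fin n, k ≤ (j : ℕ) ∧ (j : ℕ) < k' ∧ u j = b) →
      ∃ j : Fin n, k ≤ (j : ℕ) ∧ (j : ℕ) < k' ∧ u j = a := by
    intro a b hr
    obtain ⟨p⟩ := hr
    induction p with
    | nil => exact id
    | cons h q ih =>
      rename_i a c b
      intro hb
      obtain ⟨jc, hjck, hjck', hc⟩ := ih hb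
      have hcUk' : c ∈ U k' := ⟨jc, hjck', hc⟩
      have hcUk : c ∉ U k := by
        rintro ⟨jj, hjjk, heq⟩
        have : jj = jc := hu_inj (heq.trans hc.symm)
        omega
      have haUk' : a ∈ U k' := by
        by_contra hcon
        exact hZzero k' hZk' a c hcon hcUk' h
      obtain ⟨ja, hjak', ha⟩ := haUk'
      have hjak : k ≤ (ja : ℕ) := by
        by_contra hcon
        push_neg at hcon
        exact hZzero k hZk c a hcUk ⟨ja, hcon, ha⟩ h.symm
      exact ⟨ja, hjak, hjak', ha⟩
  ext x
  simp only [Set.mem_setOf_eq]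
  constructor
  · rintro ⟨j, hj, hkj, hjk', rfl⟩
    exact reach j hj hkj hjk'
  · intro hx
    obtain ⟨j, h1, h2, h3⟩ := closed x (u ⟨k, hk⟩) hx ⟨⟨k, hk⟩, le_refl k, hkk', rfl⟩
    exact ⟨j.val, j.isLt, h1, h2, by simpa using h3⟩
end

section
/- Let Z : ℕ → ℤ satisfy Z(0) = 0 and Z(k) ≥ 0 for all k ≥ 0, and define Y : ℕ → ℤ by Y(k) = Z(k) − #{j ∈ {0, 1, …, k} : Z(j) = 0}. Then for every k ≥ 0 one has min{Y(j) : 0 ≤ j ≤ k} = −#{j ∈ {0, 1, …, k} : Z(j) = 0}, and consequently Z(k) = Y(k) − min{Y(j) : 0 ≤ j ≤ k} for every k ≥ 0. -/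
/-! The walk `Y` loses one unit exactly at each zero of `Z` and otherwise stays above the
current level `-#{zeros so far}`, because `Z ≥ 0`. The level is attained at the last zero of `Z`
up to time `k`, which exists since `Z 0 = 0`; so the running minimum of `Y` is minus the number
of zeros, and subtracting it from `Y` gives back `Z`. -/

open Finset

theorem Nat.exists_le_and_count_succ_eq {p : ℕ → Prop} [DecidablePred p] (h0 : p 0) (k : ℕ) :
    ∃ j ≤ k, p j ∧ Nat.count p (j + 1) = Nat.count p (k + 1) := by
  induction k with
  | zero => exact ⟨0, le_rfl, h0, rfl⟩
  | succ k ih =>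
    by_cases hk : p (k + 1)
    · exact ⟨k + 1, le_rfl, hk, rfl⟩
    · obtain ⟨j, hjk, hj, hcount⟩ := ih
      refine ⟨j, hjk.trans k.le_succ, hj, ?_⟩
      rw [Nat.count_succ _ (k + 1), if_neg hk, hcount, add_zero]

theorem min'_image_eq_neg_count_zeros {Z Y : ℕ → ℤ} (hZ0 : Z 0 = 0) (hZnn : ∀ k, 0 ≤ Z k)
    (hY : ∀ k, Y k = Z k - Nat.count (fun j => Z j = 0) (k + 1)) (k : ℕ)
    (hs : ((range (k + 1)).image Y).Nonempty) :
    ((range (k + 1)).image Y).min' hs = -Nat.count (fun j => Z j = 0) (k + 1) := by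
  obtain ⟨j, hjk, hZj, hcount⟩ := Nat.exists_le_and_count_succ_eq (p := fun j => Z j = 0) hZ0 k
  apply le_antisymm
  · calc ((range (k + 1)).image Y).min' hs
        ≤ Y j := min'_le _ _ (mem_image_of_mem Y (mem_range.2 (Nat.lt_succ_of_le hjk)))
      _ = _ := by rw [hY, hZj, hcount, zero_sub]
  · refine le_min' _ _ _ fun y hy => ?_
    obtain ⟨i, hi, rfl⟩ := mem_image.1 hy
    have hcount_le : Nat.count (fun j => Z j = 0) (i + 1) ≤ Nat.count (fun j => Z j = 0) (k + 1) :=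
      Nat.count_monotone _ (mem_range.1 hi)
    rw [hY]
    linarith [hZnn i, (Nat.cast_le (α := ℤ)).2 hcount_le]

/-- If `Z : ℕ → ℤ` satisfies `Z 0 = 0` and `Z k ≥ 0`, and
`Y k = Z k − #{j ≤ k : Z j = 0}`, then for every `k`,
`min {Y j : j ≤ k} = −#{j ≤ k : Z j = 0}` and hence `Z k = Y k − min {Y j : j ≤ k}`. -/
theorem stmt6 (Z : ℕ → ℤ) (hZ0 : Z 0 = 0) (hZnn : ∀ k, 0 ≤ Z k)
    (Y : ℕ → ℤ)
    (hY : ∀ k, Y k = Z k - (((Finset.range (k + 1)).filter fun j => Z j = 0).card : ℤ)) :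
    ∀ k : ℕ,
      ((Finset.range (k + 1)).image Y).min' (Finset.nonempty_range_add_one.image Y)
        = -((((Finset.range (k + 1)).filter fun j => Z j = 0).card : ℤ))
      ∧ Z k = Y k - ((Finset.range (k + 1)).image Y).min' (Finset.nonempty_range_add_one.image Y) := by
  simp only [← Nat.count_eq_card_filter_range] at hY ⊢
  intro k
  have hmin := min'_image_eq_neg_count_zeros hZ0 hZnn hY k (nonempty_range_add_one.image Y)
  exact ⟨hmin, by rw [hmin, hY, sub_neg_eq_add, sub_add_cancel]⟩
end

section
/- Let s be a finite multiset of nonnegative real numbers, let a be an element of s and b an element of s with one copy of a removed, and let s' be the multiset obtained from s by removing one copy of a and one copy of b and adding one copy of a + b. Then for every k ≥ 0, the sum of the k largest elements of the multiset {x² : x ∈ s'} (all of them if s' has fewer than k elements) is greater than or equal to the sum of the k largest elements of the multiset {x² : x ∈ s}. In other words, coalescing two parts of a configuration never decreases any partial sum S²(x)_k of the squares of the parts sorted in decreasing order. -/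
/-!
Write `T m k` for the sum of the `k` largest elements of `m`. Inserting a part `x ≥ 0` into a
configuration satisfies the recursion `T (x ::ₘ m) (k + 1) = max (x + T m k) (T m (k + 1))`,
and for nonnegative parts `T (x ::ₘ m) k ≤ x + T m k`. Unfolding the recursion twice shows that
replacing two parts `u, v ≥ 0` by a single part `w ≥ u + v` does not decrease any `T _ k`.
Squares of nonnegative reals satisfy `(a + b)² ≥ a² + b²`, so this applies to the squared masses.
-/

namespace List

variable {α : Type*} [AddCommMonoid α] [LinearOrder α] [IsOrderedAddMonoid α]

theorem sum_take_le_sum_take_succ {l : List α} (hl : ∀ y ∈ l, 0 ≤ y) (k : ℕ) :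
    (l.take k).sum ≤ (l.take (k + 1)).sum := by
  rw [take_add_one, sum_append]
  refine le_add_of_nonneg_right ?_
  cases h : l[k]? with
  | none => simp
  | some y => simpa using hl y (mem_of_getElem? h)

theorem sum_take_succ_le_add {l : List α} {x : α} (hx : 0 ≤ x) (hl : ∀ y ∈ l, y ≤ x)
    (k : ℕ) : (l.take (k + 1)).sum ≤ (l.take k).sum + x := by
  rw [take_add_one, sum_append]
  gcongr
  cases h : l[k]? with
  | none => simpa using hx
  | some y => simpa using hl y (mem_of_getElem? h)

theorem sum_take_succ_orderedInsert {l : List α} (hl : l.Pairwise (· ≥ ·)) {x : α}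
    (hx : 0 ≤ x) (k : ℕ) :
    ((l.orderedInsert (· ≥ ·) x).take (k + 1)).sum
      = max (x + (l.take k).sum) (l.take (k + 1)).sum := by
  induction l generalizing k with
  | nil => simp [hx]
  | cons a l ih =>
    rw [orderedInsert_cons]
    split_ifs with hxa
    · have hle : ∀ y ∈ a :: l, y ≤ x := by
        rintro y (_ | ⟨_, hy⟩)
        exacts [hxa, ((pairwise_cons.1 hl).1 y hy).trans hxa]
      rw [max_eq_left (add_comm x _ ▸ sum_take_succ_le_add hx hle k)]
      simp
    · cases k with
      | zero => simpa using (le_of_lt (not_le.1 hxa))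
      | succ k =>
        simp only [take_succ_cons, sum_cons, ih (pairwise_cons.1 hl).2 k, ← max_add_add_left,
          add_left_comm]

end List

namespace Multiset

variable {α : Type*} [LinearOrder α]

theorem pairwise_reverse_sort (m : Multiset α) :
    (m.sort (· ≤ ·)).reverse.Pairwise (· ≥ ·) :=
  List.pairwise_reverse.2 (m.pairwise_sort _)

theorem reverse_sort_cons (x : α) (m : Multiset α) :
    ((x ::ₘ m).sort (· ≤ ·)).reverse = (m.sort (· ≤ ·)).reverse.orderedInsert (· ≥ ·) x := by
  refine List.Perm.eq_of_pairwise' (pairwise_reverse_sort _)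
    ((pairwise_reverse_sort m).orderedInsert x _) (Multiset.coe_eq_coe.1 ?_)
  rw [Multiset.coe_eq_coe.2 (List.perm_orderedInsert _ x _), ← Multiset.cons_coe,
    Multiset.coe_reverse, Multiset.coe_reverse, sort_eq, sort_eq]

variable [AddCommMonoid α]

def sumLargest (m : Multiset α) (k : ℕ) : α :=
  ((m.sort (· ≤ ·)).reverse.take k).sum

@[simp]
theorem sumLargest_zero (m : Multiset α) : m.sumLargest 0 = 0 := by
  simp [sumLargest]

variable [IsOrderedAddMonoid α]

theorem sumLargest_cons_succ {x : α} (hx : 0 ≤ x) (m : Multiset α) (k : ℕ) :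
    (x ::ₘ m).sumLargest (k + 1) = max (x + m.sumLargest k) (m.sumLargest (k + 1)) := by
  rw [sumLargest, reverse_sort_cons, List.sum_take_succ_orderedInsert (pairwise_reverse_sort m) hx]
  rfl

theorem sumLargest_le_sumLargest_succ {m : Multiset α} (hm : ∀ y ∈ m, 0 ≤ y) (k : ℕ) :
    m.sumLargest k ≤ m.sumLargest (k + 1) :=
  List.sum_take_le_sum_take_succ (fun y hy => hm y ((mem_sort _).1 (List.mem_reverse.1 hy))) k

theorem sumLargest_cons_le_add {x : α} (hx : 0 ≤ x) {m : Multiset α} (hm : ∀ y ∈ m, 0 ≤ y)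
    (k : ℕ) : (x ::ₘ m).sumLargest k ≤ x + m.sumLargest k := by
  cases k with
  | zero => simpa using hx
  | succ k =>
    rw [sumLargest_cons_succ hx]
    refine max_le ?_ (le_add_of_nonneg_left hx)
    gcongr
    exact sumLargest_le_sumLargest_succ hm k

theorem sumLargest_cons_cons_le_cons {u v w : α} (hu : 0 ≤ u) (hv : 0 ≤ v) (huvw : u + v ≤ w)
    {t : Multiset α} (ht : ∀ y ∈ t, 0 ≤ y) (k : ℕ) :
    (u ::ₘ v ::ₘ t).sumLargest k ≤ (w ::ₘ t).sumLargest k := by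
  have hw : 0 ≤ w := (add_nonneg hu hv).trans huvw
  cases k with
  | zero => simp
  | succ k =>
    rw [sumLargest_cons_succ hu, sumLargest_cons_succ hv, sumLargest_cons_succ hw]
    have hvw : v ≤ w := (le_add_of_nonneg_left hu).trans huvw
    refine max_le ?_ (by gcongr)
    calc u + (v ::ₘ t).sumLargest k ≤ u + (v + t.sumLargest k) := by
          gcongr; exact sumLargest_cons_le_add hv ht k
      _ ≤ w + t.sumLargest k := by rw [← add_assoc]; gcongr
      _ ≤ _ := le_max_left _ _

end Multiset

/-- Coalescing two parts of a configuration of nonnegative masses never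
decreases any partial sum of the squares of the parts sorted in decreasing order.
Here the sum of the `k` largest elements of a multiset `m` of reals is the sum of the
first `k` entries of `m` sorted in decreasing order (obtained by reversing the
increasing sort). -/
theorem stmt7 (s : Multiset ℝ) (hs : ∀ x ∈ s, 0 ≤ x)
    (a : ℝ) (ha : a ∈ s) (b : ℝ) (hb : b ∈ s.erase a)
    (s' : Multiset ℝ) (hs' : s' = (a + b) ::ₘ ((s.erase a).erase b)) :
    ∀ k : ℕ,
      ((((s.map fun x => x ^ 2).sort (· ≤ ·)).reverse.take k).sum
        ≤ (((s'.map fun x => x ^ 2).sort (· ≤ ·)).reverse.take k).sum) := by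
  intro k
  have hs_eq : s = a ::ₘ b ::ₘ (s.erase a).erase b := by
    rw [Multiset.cons_erase hb, Multiset.cons_erase ha]
  have hsq : a ^ 2 + b ^ 2 ≤ (a + b) ^ 2 := by
    nlinarith [hs a ha, hs b (Multiset.mem_of_mem_erase hb)]
  change (s.map (· ^ 2)).sumLargest k ≤ (s'.map (· ^ 2)).sumLargest k
  rw [hs', hs_eq, Multiset.map_cons, Multiset.map_cons, Multiset.map_cons,
    Multiset.erase_cons_head, Multiset.erase_cons_head]
  exact Multiset.sumLargest_cons_cons_le_cons (sq_nonneg a) (sq_nonneg b) hsq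
    (by simp only [Multiset.mem_map]; rintro _ ⟨x, -, rfl⟩; exact sq_nonneg x) k
end
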